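/- arXiv:2204.01413 — 2 statements merged into one kernel-verified Lean document; each statement's English description precedes it below -/
import Mathlib

section
/- Let μ be a measure on X, Ψ : X → [-∞, 0) measurable, g : X → [0,∞) integrable with ∫_X g e^{-Ψ} dμ < ∞, and suppose there exist constants C > 0 and q > 1 such that ∫_{{qΨ < -t}} g dμ ≥ e^{-t} C for all t ∈ [0,∞). Then ∫_X g e^{-Ψ} dμ ≥ (q/(q-1)) C. -/
open MeasureTheory Real

/-- If `Ψ < 0`, `g ≥ 0` is integrable with `∫ g e^{-Ψ} dμ < ∞`, and
`∫_{{qΨ < -t}} g dμ ≥ e^{-t} C` for all `t ≥ 0` (with `C > 0`, `q > 1`), then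
`∫ g e^{-Ψ} dμ ≥ (q/(q-1)) C`. -/
theorem stmt_10 {X : Type*} [MeasurableSpace X] (μ : Measure X)
    (Ψ : X → ℝ) (hΨmeas : Measurable Ψ) (hΨneg : ∀ x, Ψ x < 0)
    (g : X → ℝ) (hg : Measurable g) (hgpos : ∀ x, 0 ≤ g x) (hgint : Integrable g μ)
    (hint : Integrable (fun x => g x * exp (-Ψ x)) μ)
    (C q : ℝ) (hC : 0 < C) (hq : 1 < q)
    (hlow : ∀ t : ℝ, 0 ≤ t → exp (-t) * C ≤ ∫ x in {x | q * Ψ x < -t}, g x ∂μ) :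
    q / (q - 1) * C ≤ ∫ x, g x * exp (-Ψ x) ∂μ := by
  have hq0 : (0:ℝ) < q := lt_trans one_pos hq
  have hq1 : q - 1 ≠ 0 := by linarith
  set ν := μ.withDensity (fun x => ENNReal.ofReal (g x)) with hν
  have hgm : Measurable fun x => ENNReal.ofReal (g x) := hg.ennreal_ofReal
  have hnn : 0 ≤ᵐ[μ] fun x => g x * exp (-Ψ x) :=
    Filter.Eventually.of_forall fun x => mul_nonneg (hgpos x) (exp_pos _).le
  -- The Bochner integral equals the toReal of the lintegral
  have hkey : ENNReal.ofReal (∫ x, g x * exp (-Ψ x) ∂μ)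
      = ∫⁻ x, ENNReal.ofReal (g x * exp (-Ψ x)) ∂μ :=
    ofReal_integral_eq_lintegral_ofReal hint hnn
  -- lintegral over μ equals lintegral of exp(-Ψ) over ν
  have hwd : ∫⁻ x, ENNReal.ofReal (g x * exp (-Ψ x)) ∂μ
      = ∫⁻ x, ENNReal.ofReal (exp (-Ψ x)) ∂ν := by
    rw [hν, lintegral_withDensity_eq_lintegral_mul μ hgm
      (g := fun x => ENNReal.ofReal (exp (-Ψ x))) (hΨmeas.neg.exp.ennreal_ofReal)]
    apply lintegral_congr
    intro x
    simp [ENNReal.ofReal_mul (hgpos x)]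
  -- lower bound for ν of the superlevel sets
  have hνS : ∀ S : Set X, MeasurableSet S → ENNReal.ofReal (∫ x in S, g x ∂μ) ≤ ν S := by
    intro S hS
    rw [hν, withDensity_apply _ hS,
      ← ofReal_integral_eq_lintegral_ofReal hgint.integrableOn
        (Filter.Eventually.of_forall hgpos)]
  have hmbleS : ∀ t : ℝ, MeasurableSet {x | q * Ψ x < -t} := fun t =>
    measurableSet_lt (measurable_const.mul hΨmeas) measurable_const
  have hνlow : ∀ t : ℝ, 0 ≤ t → ENNReal.ofReal (exp (-t) * C) ≤ ν {x | q * Ψ x < -t} := by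
    intro t ht
    exact le_trans (ENNReal.ofReal_le_ofReal (hlow t ht)) (hνS _ (hmbleS t))
  -- layer cake
  have hlc : ∫⁻ x, ENNReal.ofReal (exp (-Ψ x)) ∂ν
      = ∫⁻ t in Set.Ioi (0:ℝ), ν {x | t < exp (-Ψ x)} :=
    lintegral_eq_lintegral_meas_lt ν
      (Filter.Eventually.of_forall fun x => (exp_pos _).le)
      (hΨmeas.neg.exp.aemeasurable)
  -- split the outer integral
  have hsplit : ∫⁻ t in Set.Ioi (0:ℝ), ν {x | t < exp (-Ψ x)}
      = (∫⁻ t in Set.Ioc (0:ℝ) 1, ν {x | t < exp (-Ψ x)})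
        + ∫⁻ t in Set.Ioi (1:ℝ), ν {x | t < exp (-Ψ x)} := by
    rw [← Set.Ioc_union_Ioi_eq_Ioi (zero_le_one : (0:ℝ) ≤ 1),
      lintegral_union measurableSet_Ioi Set.Ioc_disjoint_Ioi_same]
  -- Part 1 : on Ioc 0 1 the measure is at least ofReal C
  have hpart1 : ENNReal.ofReal C ≤ ∫⁻ t in Set.Ioc (0:ℝ) 1, ν {x | t < exp (-Ψ x)} := by
    have hb : ∀ t ∈ Set.Ioc (0:ℝ) 1, ENNReal.ofReal C ≤ ν {x | t < exp (-Ψ x)} := by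
      intro t ht
      have h0 := hνlow 0 le_rfl
      rw [neg_zero, exp_zero, one_mul] at h0
      refine le_trans h0 (measure_mono ?_)
      intro x _
      have : (1:ℝ) < exp (-Ψ x) := by
        rw [← exp_zero, exp_lt_exp]; linarith [hΨneg x]
      exact lt_of_le_of_lt ht.2 this
    calc ENNReal.ofReal C = ∫⁻ _ in Set.Ioc (0:ℝ) 1, ENNReal.ofReal C := by
          simp [Real.volume_Ioc]
      _ ≤ _ := setLIntegral_mono' measurableSet_Ioc hb
  -- Part 2 : on Ioi 1
  have hpart2 : ENNReal.ofReal (C / (q - 1)) ≤ ∫⁻ t in Set.Ioi (1:ℝ), ν {x | t < exp (-Ψ x)} := by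
    have hb : ∀ t ∈ Set.Ioi (1:ℝ),
        ENNReal.ofReal (t ^ (-q) * C) ≤ ν {x | t < exp (-Ψ x)} := by
      intro t ht
      have ht0 : (0:ℝ) < t := lt_trans one_pos ht
      have hlt : 0 < Real.log t := Real.log_pos ht
      have h1 := hνlow (q * Real.log t) (by positivity)
      have hrw : Real.exp (-(q * Real.log t)) = t ^ (-q) := by
        rw [Real.rpow_def_of_pos ht0]
        ring_nf
      rw [hrw] at h1
      refine le_trans h1 (measure_mono ?_)
      intro x hx
      simp only [Set.mem_setOf_eq] at hx ⊢
      have hΨx : Ψ x < -Real.log t := by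
        nlinarith [hΨneg x]
      rw [← Real.exp_log ht0, exp_lt_exp]
      linarith
    have hInt : IntegrableOn (fun t : ℝ => t ^ (-q) * C) (Set.Ioi (1:ℝ)) := by
      exact (integrableOn_Ioi_rpow_of_lt (by linarith) one_pos).mul_const C
    have hval : ∫ t in Set.Ioi (1:ℝ), t ^ (-q) * C = C / (q - 1) := by
      rw [MeasureTheory.integral_mul_const, integral_Ioi_rpow_of_lt (by linarith) one_pos]
      rw [Real.one_rpow]
      rw [div_eq_div_iff (by linarith) (by linarith : q - 1 ≠ 0) |>.mpr (by ring : (-1:ℝ) * (q-1) = 1 * (-q+1))]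
      ring
    calc ENNReal.ofReal (C / (q - 1))
        = ∫⁻ t in Set.Ioi (1:ℝ), ENNReal.ofReal (t ^ (-q) * C) := by
          rw [← hval, ofReal_integral_eq_lintegral_ofReal hInt]
          exact (ae_restrict_iff' measurableSet_Ioi).mpr (Filter.Eventually.of_forall
            fun t ht => mul_nonneg (Real.rpow_nonneg (le_of_lt (lt_trans one_pos ht)) _) hC.le)
      _ ≤ _ := by
          refine setLIntegral_mono' measurableSet_Ioi hb
  -- combine
  have hsum : ENNReal.ofReal (q / (q - 1) * C)
      ≤ ∫⁻ t in Set.Ioi (0:ℝ), ν {x | t < exp (-Ψ x)} := by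
    rw [hsplit]
    have : q / (q - 1) * C = C + C / (q - 1) := by field_simp; ring
    rw [this, ENNReal.ofReal_add hC.le (div_nonneg hC.le (by linarith))]
    exact add_le_add hpart1 hpart2
  have hfinal : ENNReal.ofReal (q / (q - 1) * C)
      ≤ ENNReal.ofReal (∫ x, g x * exp (-Ψ x) ∂μ) := by
    rw [hkey, hwd, hlc]; exact hsum
  have := (ENNReal.ofReal_le_ofReal_iff (integral_nonneg fun x =>
    mul_nonneg (hgpos x) (exp_pos _).le)).mp hfinal
  exact this
end

section
/- Let u : E → [-∞, ∞) be a function on the closed right half-plane E = {w ∈ ℂ : Re w ≥ 0} that depends only on Re w, is upper semicontinuous on E, and is subharmonic on the open half-plane {Re w > 0}. Then t ↦ u(t) (for t ∈ [0, ∞), identifying t with t + i·0) is convex on (0, ∞), and if additionally u satisfies the sub-mean value inequality at every boundary point of E for discs contained in E, then u is convex on [0, ∞). -/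
/-!
Subtracting `s * Re w`, which has the mean value property on discs, reduces convexity on
`[x, z]` to a maximum principle: a function `g (Re w)` with the sub-mean value property on a
strip attains its maximum over `[a, b]` at an endpoint. Otherwise, at the rightmost maximum
point `x₀` we have `g < g x₀` on the right half of a small disc around `x₀`, so the disc
average of `g` is strictly below `g x₀`.

At the boundary, the secant inequality on `[t, z]` with `0 < t` bounds `u t` from below by an
affine function of `t`; upper semicontinuity at `0` lets `t → 0⁺`.
-/

open MeasureTheory Real Metric Set Filter Topology

theorem UpperSemicontinuousOn.exists_isMaxOn_forall_lt
    {α β : Type*} [ConditionallyCompleteLinearOrder α] [TopologicalSpace α]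
    [ClosedIciTopology α] [LinearOrder β] {g : α → β} {K : Set α} (hK : IsCompact K)
    (hne : K.Nonempty) (hg : UpperSemicontinuousOn g K) :
    ∃ x ∈ K, IsMaxOn g K x ∧ ∀ y ∈ K, x < y → g y < g x := by
  obtain ⟨x₀, hx₀, hmax₀⟩ := hg.exists_isMaxOn hne hK
  obtain ⟨v, hv, hKv⟩ := upperSemicontinuousOn_iff_preimage_Ici.1 hg (g x₀)
  set S := K ∩ g ⁻¹' Ici (g x₀)
  have hS : IsCompact S := hKv ▸ hK.inter_right hv
  have hxS : sSup S ∈ S := hS.sSup_mem ⟨x₀, hx₀, le_rfl⟩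
  have hmax : IsMaxOn g K (sSup S) := fun y hy => (hmax₀ hy).trans hxS.2
  refine ⟨sSup S, hxS.1, hmax, fun y hy hlt => lt_of_not_ge fun hle => ?_⟩
  exact hlt.not_ge (le_csSup hS.bddAbove ⟨hy, hxS.2.trans hle⟩)

theorem UpperSemicontinuousWithinAt.le_of_frequently_le {α β : Type*} [TopologicalSpace α]
    [LinearOrder β] [TopologicalSpace β] [OrderTopology β] [DenselyOrdered β]
    {f g : α → β} {s : Set α} {x : α} (hf : UpperSemicontinuousWithinAt f s x)
    (hg : ContinuousWithinAt g s x) (h : ∃ᶠ y in 𝓝[s] x, g y ≤ f y) : g x ≤ f x := by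
  by_contra! hlt
  obtain ⟨c, hfc, hcg⟩ := exists_between hlt
  have hev : ∀ᶠ y in 𝓝[s] x, f y < g y :=
    (hf c hfc).and (hg.eventually (lt_mem_nhds hcg)) |>.mono fun _ hy => hy.1.trans hy.2
  exact h (hev.mono fun _ hy => hy.not_ge)

theorem convexOn_of_secant {𝕜 : Type*} [Field 𝕜] [LinearOrder 𝕜] [IsStrictOrderedRing 𝕜]
    {s : Set 𝕜} {f : 𝕜 → 𝕜} (hs : Convex 𝕜 s)
    (hf : ∀ ⦃x y z : 𝕜⦄, x ∈ s → z ∈ s → x < y → y < z →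
      (z - x) * f y ≤ (z - y) * f x + (y - x) * f z) :
    ConvexOn 𝕜 s f :=
  convexOn_of_slope_mono_adjacent hs fun hx hz hxy hyz => by
    rw [div_le_div_iff₀ (sub_pos.2 hxy) (sub_pos.2 hyz)]
    linear_combination hf hx hz hxy hyz

theorem ConvexOn.convexOn_Ici_of_upperSemicontinuousWithinAt {f : ℝ → ℝ} {c : ℝ}
    (hf : ConvexOn ℝ (Ioi c) f) (hc : UpperSemicontinuousWithinAt f (Ici c) c) :
    ConvexOn ℝ (Ici c) f := by
  refine convexOn_of_secant (convex_Ici c) fun x y z hx hz hxy hyz => ?_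
  rcases (mem_Ici.1 hx).eq_or_lt with rfl | hcx
  · have hzy : 0 < z - y := sub_pos.2 hyz
    suffices ((z - c) * f y - (y - c) * f z) / (z - y) ≤ f c by
      rw [div_le_iff₀ hzy] at this
      linarith
    refine hc.le_of_frequently_le (g := fun t => ((z - t) * f y - (y - t) * f z) / (z - y))
      (Continuous.continuousWithinAt (by fun_prop)) (Eventually.frequently ?_ |>.filter_mono
      (nhdsWithin_mono _ Ioi_subset_Ici_self))
    filter_upwards [Ioo_mem_nhdsGT hxy] with t ht
    rw [div_le_iff₀ hzy]
    linarith [hf.secant_mono_aux1 ht.1 (ht.1.trans (ht.2.trans hyz)) ht.2 hyz]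
  · exact hf.secant_mono_aux1 hcx (hcx.trans (hxy.trans hyz)) hxy hyz

theorem setIntegral_ball_continuousLinearMap {E : Type*} [NormedAddCommGroup E]
    [NormedSpace ℝ E] [MeasurableSpace E] [BorelSpace E] [ProperSpace E] (μ : Measure E)
    [μ.IsAddLeftInvariant] [μ.IsNegInvariant] [IsFiniteMeasureOnCompacts μ] (L : E →L[ℝ] ℝ)
    (z : E) (r : ℝ) :
    ∫ w in ball z r, L w ∂μ = μ.real (ball z r) * L z := by
  -- The reflection `w ↦ 2z - w` preserves `μ` and `ball z r`, and `L (2z - w) = 2 L z - L w`.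
  have hpre : (fun w => z + z - w) ⁻¹' ball z r = ball z r := by
    ext w
    rw [mem_preimage, mem_ball, mem_ball, dist_eq_norm, dist_eq_norm, ← norm_neg (w - z)]
    congr! 2
    abel
  have hrefl := (Measure.measurePreserving_sub_left μ (z + z)).setIntegral_preimage_emb
    (measurableEmbedding_subLeft (z + z)) L (ball z r)
  have hint : IntegrableOn L (ball z r) μ :=
    (L.continuous.continuousOn.integrableOn_compact (isCompact_closedBall z r)).mono_set
      ball_subset_closedBall
  have hconst : IntegrableOn (fun _ => L z + L z) (ball z r) μ :=
    integrableOn_const measure_ball_lt_top.ne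
  rw [hpre] at hrefl
  simp only [map_sub, map_add] at hrefl
  rw [integral_sub hconst hint, setIntegral_const, smul_eq_mul] at hrefl
  linarith

theorem Complex.measureReal_ball (z : ℂ) {r : ℝ} (hr : 0 ≤ r) :
    volume.real (ball z r) = π * r ^ 2 := by
  simp [measureReal_def, ENNReal.toReal_ofReal hr, mul_comm]

theorem Complex.setIntegral_ball_re (z : ℂ) {r : ℝ} (hr : 0 ≤ r) :
    ∫ w in ball z r, w.re = π * r ^ 2 * z.re := by
  simpa [Complex.measureReal_ball z hr] using
    setIntegral_ball_continuousLinearMap volume Complex.reCLM z r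

theorem setIntegral_lt_measureReal_mul {X : Type*} [TopologicalSpace X] [MeasurableSpace X]
    [OpensMeasurableSpace X] {μ : Measure X} [μ.IsOpenPosMeasure] {s U : Set X} {v : X → ℝ}
    {M : ℝ} (hs : MeasurableSet s) (hμs : μ s ≠ ⊤) (hv : IntegrableOn v s μ)
    (hle : ∀ x ∈ s, v x ≤ M) (hU : IsOpen U) (hUne : U.Nonempty) (hUs : U ⊆ s)
    (hlt : ∀ x ∈ U, v x < M) :
    ∫ x in s, v x ∂μ < μ.real s * M := by
  have hpos : 0 < ∫ x in s, (M - v x) ∂μ := by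
    refine (setIntegral_pos_iff_support_of_nonneg_ae
      ((ae_restrict_iff' hs).2 (ae_of_all _ fun x hx => sub_nonneg.2 (hle x hx)))
      ((integrableOn_const hμs).sub hv)).2 ?_
    exact (hU.measure_pos μ hUne).trans_le
      (measure_mono fun x hx => ⟨(sub_pos.2 (hlt x hx)).ne', hUs hx⟩)
  rwa [integral_sub (integrableOn_const hμs : IntegrableOn (fun _ => M) s μ) hv,
    setIntegral_const, smul_eq_mul, sub_pos] at hpos

theorem le_max_of_submean_on_strip {g : ℝ → ℝ} {a b : ℝ} (hab : a ≤ b)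
    (hg : UpperSemicontinuousOn g (Icc a b))
    (hint : ∀ c r, closedBall c r ⊆ Complex.re ⁻¹' Ioo a b →
      IntegrableOn (fun w : ℂ => g w.re) (ball c r))
    (hsub : ∀ c r, 0 < r → closedBall c r ⊆ Complex.re ⁻¹' Ioo a b →
      g c.re ≤ (1 / (π * r ^ 2)) * ∫ w in ball c r, g w.re) :
    ∀ x ∈ Icc a b, g x ≤ max (g a) (g b) := by
  obtain ⟨x₀, hx₀, hmax, hright⟩ :=
    hg.exists_isMaxOn_forall_lt isCompact_Icc (nonempty_Icc.2 hab)
  intro x hx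
  refine (hmax hx).trans (le_of_not_gt fun hbig => ?_)
  have hax₀ : a < x₀ := hx₀.1.lt_of_ne (by rintro rfl; exact (le_max_left _ _).not_gt hbig)
  have hx₀b : x₀ < b := hx₀.2.lt_of_ne (by rintro rfl; exact (le_max_right _ _).not_gt hbig)
  obtain ⟨r, hr, hra, hrb⟩ : ∃ r > 0, r < x₀ - a ∧ r < b - x₀ :=
    ⟨min (x₀ - a) (b - x₀) / 2, half_pos (lt_min (sub_pos.2 hax₀) (sub_pos.2 hx₀b)),
      by linarith [min_le_left (x₀ - a) (b - x₀)],
      by linarith [min_le_right (x₀ - a) (b - x₀)]⟩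
  have hstrip : closedBall (x₀ : ℂ) r ⊆ Complex.re ⁻¹' Ioo a b := by
    intro w hw
    have := (Complex.abs_re_le_norm (w - x₀)).trans (mem_closedBall_iff_norm.1 hw)
    rw [Complex.sub_re, Complex.ofReal_re, abs_le] at this
    constructor <;> linarith
  have hmem : ∀ w ∈ ball (x₀ : ℂ) r, w.re ∈ Icc a b := fun w hw =>
    Ioo_subset_Icc_self (hstrip (ball_subset_closedBall hw))
  have hcenter : ((x₀ + r / 2 : ℝ) : ℂ) ∈ ball (x₀ : ℂ) r ∩ {w | x₀ < w.re} := by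
    refine ⟨?_, by simp [hr]⟩
    rw [mem_ball, dist_eq_norm, ← Complex.ofReal_sub, Complex.norm_real, Real.norm_eq_abs]
    rw [abs_of_pos (by linarith)]
    linarith
  have hlt := setIntegral_lt_measureReal_mul measurableSet_ball measure_ball_lt_top.ne
    (hint _ _ hstrip) (fun w hw => hmax (hmem w hw))
    (isOpen_ball.inter (isOpen_lt continuous_const Complex.continuous_re)) ⟨_, hcenter⟩
    inter_subset_left (fun w hw => hright _ (hmem w hw.1) hw.2)
  have hge := hsub x₀ r hr hstrip
  rw [Complex.measureReal_ball _ hr.le] at hlt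
  rw [Complex.ofReal_re, one_div, inv_mul_eq_div, le_div_iff₀ (by positivity)] at hge
  linarith

theorem convexOn_of_submean {g : ℝ → ℝ} {I : Set ℝ} (hI : Convex ℝ I)
    (hg : UpperSemicontinuousOn g I)
    (hint : ∀ c r, closedBall c r ⊆ Complex.re ⁻¹' I →
      IntegrableOn (fun w : ℂ => g w.re) (ball c r))
    (hsub : ∀ c r, 0 < r → closedBall c r ⊆ Complex.re ⁻¹' I →
      g c.re ≤ (1 / (π * r ^ 2)) * ∫ w in ball c r, g w.re) :
    ConvexOn ℝ I g := by
  refine convexOn_of_secant hI fun x y z hx hz hxy hyz => ?_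
  have hxz : Icc x z ⊆ I := hI.ordConnected.out hx hz
  have hstrip : ∀ c r, closedBall c r ⊆ Complex.re ⁻¹' Ioo x z →
      closedBall c r ⊆ Complex.re ⁻¹' I :=
    fun c r h => h.trans (preimage_mono (Ioo_subset_Icc_self.trans hxz))
  set s := (g z - g x) / (z - x)
  have hre_int : ∀ c r, IntegrableOn (fun w : ℂ => w.re) (ball c r) :=
    fun c r => (Complex.continuous_re.continuousOn.integrableOn_compact
      (isCompact_closedBall c r)).mono_set ball_subset_closedBall
  have hsub' : ∀ c r, 0 < r → closedBall c r ⊆ Complex.re ⁻¹' Ioo x z →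
      g c.re - s * c.re ≤ (1 / (π * r ^ 2)) * ∫ w in ball c r, (g w.re - s * w.re) := by
    intro c r hr h
    rw [integral_sub (hint c r (hstrip c r h)) ((hre_int c r).const_mul s), integral_const_mul,
      Complex.setIntegral_ball_re c hr.le, mul_sub]
    have := hsub c r hr (hstrip c r h)
    field_simp
    field_simp at this
    linarith
  have hmax := le_max_of_submean_on_strip (g := fun t => g t - s * t) (hxy.trans hyz).le
    ((hg.mono hxz).add (continuous_const.mul continuous_id).neg.continuousOn.upperSemicontinuousOn)
    (fun c r h => (hint c r (hstrip c r h)).sub ((hre_int c r).const_mul s)) hsub'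
    y ⟨hxy.le, hyz.le⟩
  have hzx : z - x ≠ 0 := by linarith
  have hend : g z - s * z = g x - s * x := by simp only [s]; field_simp; ring
  rw [hend, max_self] at hmax
  simp only [s] at hmax
  rw [← sub_nonneg] at hmax ⊢
  convert mul_nonneg (sub_pos.2 (hxy.trans hyz)).le hmax using 1
  field_simp
  ring

/-- Let `u` be defined on the closed right half-plane `E = {Re w ≥ 0}`,
depending only on `Re w`, upper semicontinuous on `E`, and subharmonic (locally
integrable and satisfying the sub-mean value inequality) on the open half-plane
`{Re w > 0}`. Then `t ↦ u(t)` is convex on `(0,∞)`; if moreover `u` satisfies the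
sub-mean value inequality at every boundary point of `E` for discs contained in `E`,
then `t ↦ u(t)` is convex on `[0,∞)`. -/
theorem stmt_15 (u : ℂ → ℝ)
    (hre : ∀ z w : ℂ, 0 ≤ z.re → 0 ≤ w.re → z.re = w.re → u z = u w)
    (husc : UpperSemicontinuousOn u {z : ℂ | 0 ≤ z.re})
    (hloc : LocallyIntegrableOn u {z : ℂ | 0 < z.re})
    (hsubmean : ∀ z : ℂ, 0 < z.re → ∀ r : ℝ, 0 < r →
      Metric.closedBall z r ⊆ {w : ℂ | 0 < w.re} →
      u z ≤ (1 / (π * r ^ 2)) * ∫ w in Metric.ball z r, u w) :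
    ConvexOn ℝ (Set.Ioi 0) (fun t : ℝ => u (t : ℂ)) ∧
    ((∀ z : ℂ, z.re = 0 → ∀ r : ℝ, 0 < r →
        Metric.closedBall z r ⊆ {w : ℂ | 0 ≤ w.re} →
        u z ≤ (1 / (π * r ^ 2)) * ∫ w in Metric.ball z r, u w) →
      ConvexOn ℝ (Set.Ici 0) (fun t : ℝ => u (t : ℂ))) := by
  have hu : ∀ w : ℂ, 0 ≤ w.re → u w.re = u w := fun w hw => hre _ _ (by simpa) hw (by simp)
  have hu_ball : ∀ {c : ℂ} {r : ℝ}, closedBall c r ⊆ Complex.re ⁻¹' Ioi 0 →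
      EqOn (fun w => u w.re) u (ball c r) :=
    fun h w hw => hu w (h (ball_subset_closedBall hw)).le
  have husc' : UpperSemicontinuousOn (fun t : ℝ => u t) (Ici 0) :=
    husc.comp Complex.continuous_ofReal.continuousOn fun t ht => by simpa using ht
  have hconv : ConvexOn ℝ (Ioi 0) (fun t : ℝ => u t) := by
    refine convexOn_of_submean (convex_Ioi 0) (husc'.mono Ioi_subset_Ici_self)
      (fun c r h => ?_) (fun c r hr h => ?_)
    · exact ((hloc.integrableOn_compact_subset h (isCompact_closedBall c r)).mono_set
        ball_subset_closedBall).congr_fun (hu_ball h).symm measurableSet_ball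
    · have hc : 0 < c.re := h (mem_closedBall_self hr.le)
      rw [setIntegral_congr_fun measurableSet_ball (hu_ball h), hu c hc.le]
      exact hsubmean c hc r hr h
  exact ⟨hconv, fun _ =>
    hconv.convexOn_Ici_of_upperSemicontinuousWithinAt (husc' 0 self_mem_Ici)⟩
end
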